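/- For distinct x, y in ℝ_{>0} \ {1} with all five arguments lying in ℝ_{>0} \ {1}, the Rogers dilogarithm satisfies the five-term relation: L(x) - L(y) + L(y/x) - L((y-1)/(x-1)) + L((1-1/y)/(1-1/x)) ≡ 0 mod π²/6 (i.e., the left-hand side is an integer multiple of ζ(2) = π²/6). -/

import Mathlib

open Real

noncomputable def Li2 (x : ℝ) : ℝ := ∑' n : ℕ, x ^ (n + 1) / (n + 1) ^ 2

noncomputable def rogersL (x : ℝ) : ℝ :=
  if x < 1 then Li2 x + (1 / 2) * Real.log x * Real.log (1 - x)
  else Real.pi ^ 2 / 3 - (Li2 (1 / x) + (1 / 2) * Real.log (1 / x) * Real.log (1 - 1 / x))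

open Filter Topology Set Asymptotics

/-!
Fix `x` and let `t` run between `x` and `y`, which lie on the same side of `1`. Away from `1`,
`rogersL` has derivative `-(log (1 - t) / t + log t / (1 - t)) / 2`, and with it the derivative in
`t` of the five-term combination becomes a combination of logarithms of `t`, `x`, `1 - t`, `1 - x`
and `x - t` that cancels. The combination is continuous on the closed interval, since `rogersL` is
continuous on `(0, ∞)`, also at `1`, where `rogersL 1 = ζ(2) = π²/6`. Hence it is constant, and at
`t = x` three of its five arguments are `1`, so it equals `π²/6`.
-/

lemma eq_of_continuousOn_uIcc_of_hasDerivAt_zero {f : ℝ → ℝ} {a b : ℝ}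
    (hf : ContinuousOn f (uIcc a b)) (hf' : ∀ t ∈ uIoo a b, HasDerivAt f 0 t) : f a = f b := by
  wlog hab : a < b generalizing a b
  · rcases (not_lt.mp hab).eq_or_lt with rfl | hba
    · rfl
    · exact (this (uIcc_comm a b ▸ hf) (uIoo_comm a b ▸ hf') hba).symm
  obtain ⟨c, -, hc⟩ := exists_hasDerivAt_eq_slope f (fun _ => 0) hab (uIcc_of_lt hab ▸ hf)
    fun t ht => hf' t (uIoo_of_lt hab ▸ ht)
  rw [eq_comm, div_eq_zero_iff, sub_eq_zero] at hc
  exact hc.resolve_right (sub_ne_zero.mpr hab.ne') |>.symm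

lemma div_sub_one_pos_of_mem_uIcc {x y t : ℝ} (h : 0 < (y - 1) / (x - 1)) (ht : t ∈ uIcc x y) :
    0 < (t - 1) / (x - 1) := by
  rcases div_pos_iff.mp h with ⟨hy, hx⟩ | ⟨hy, hx⟩ <;> rcases mem_uIcc.mp ht with ht | ht
  · exact div_pos (by linarith) hx
  · exact div_pos (by linarith) hx
  · exact div_pos_of_neg_of_neg (by linarith) hx
  · exact div_pos_of_neg_of_neg (by linarith) hx

lemma tendsto_log_mul_log_one_sub : Tendsto (fun t => log t * log (1 - t)) (𝓝 1) (𝓝 0) := by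
  have hlog : (fun t => log t) =O[𝓝 1] fun t => t - 1 := by
    simpa using (hasDerivAt_log one_ne_zero).isBigO_sub
  have hmul : Tendsto (fun t : ℝ => (t - 1) * log (1 - t)) (𝓝 1) (𝓝 0) := by
    convert ((continuous_mul_log.comp (continuous_sub_left 1)).tendsto 1).neg using 2
    · simp only [Function.comp_apply]
      ring
    · simp
  exact (hlog.mul (isBigO_refl _ _)).trans_tendsto hmul

lemma summable_one_div_succ_sq : Summable fun n : ℕ => 1 / ((n : ℝ) + 1) ^ 2 := by
  simpa using (summable_nat_add_iff 1).mpr (Real.summable_one_div_nat_pow.mpr one_lt_two)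

lemma norm_pow_succ_div_succ_sq_le {x : ℝ} (h : |x| ≤ 1) (n : ℕ) :
    ‖x ^ (n + 1) / ((n : ℝ) + 1) ^ 2‖ ≤ 1 / ((n : ℝ) + 1) ^ 2 := by
  rw [norm_div, norm_pow, norm_pow, Real.norm_eq_abs, Real.norm_eq_abs,
    abs_of_pos (a := (n : ℝ) + 1) n.cast_add_one_pos]
  gcongr
  exact pow_le_one₀ (abs_nonneg x) h

lemma Li2_one : Li2 1 = π ^ 2 / 6 := by
  have := (hasSum_nat_add_iff' 1).mpr hasSum_zeta_two
  simpa [Li2] using this.tsum_eq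

lemma continuousOn_Li2 : ContinuousOn Li2 (Icc (-1) 1) :=
  continuousOn_tsum (fun _ => (continuousOn_pow _).div_const _) summable_one_div_succ_sq
    fun n _ hx => norm_pow_succ_div_succ_sq_le (abs_le.mpr hx) n

lemma hasDerivAt_Li2_tsum {x : ℝ} (h : |x| < 1) :
    HasDerivAt Li2 (∑' n : ℕ, x ^ n / ((n : ℝ) + 1)) x := by
  obtain ⟨r, hxr, hr1⟩ := exists_between h
  have hr0 : 0 < r := (abs_nonneg x).trans_lt hxr
  refine hasDerivAt_tsum_of_isPreconnected (u := fun n : ℕ => r ^ n)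
    (g := fun (n : ℕ) t => t ^ (n + 1) / ((n : ℝ) + 1) ^ 2)
    (g' := fun (n : ℕ) t => t ^ n / ((n : ℝ) + 1)) (y₀ := 0)
    (summable_geometric_of_lt_one hr0.le hr1) isOpen_Ioo (convex_Ioo (-r) r).isPreconnected
    (fun n t _ => ?_) (fun n t ht => ?_) ⟨neg_lt_zero.mpr hr0, hr0⟩ (by simp) (abs_lt.mp hxr)
  · refine ((hasDerivAt_pow (n + 1) t).div_const _).congr_deriv ?_
    push_cast
    field_simp
  · rw [norm_div, norm_pow, Real.norm_eq_abs, Real.norm_eq_abs,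
      abs_of_pos (a := (n : ℝ) + 1) n.cast_add_one_pos]
    calc |t| ^ n / ((n : ℝ) + 1) ≤ |t| ^ n := div_le_self (by positivity) (by simp)
      _ ≤ r ^ n := pow_le_pow_left₀ (abs_nonneg t) (abs_lt.mpr ht).le n

lemma tsum_pow_div_succ {x : ℝ} (h : |x| < 1) (hx : x ≠ 0) :
    ∑' n : ℕ, x ^ n / ((n : ℝ) + 1) = -log (1 - x) / x := by
  refine ((hasSum_pow_div_log_of_abs_lt_one h).div_const x).tsum_eq ▸ tsum_congr fun n => ?_
  field_simp
  ring

lemma hasDerivAt_Li2 {x : ℝ} (h : |x| < 1) (hx : x ≠ 0) :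
    HasDerivAt Li2 (-log (1 - x) / x) x :=
  tsum_pow_div_succ h hx ▸ hasDerivAt_Li2_tsum h

noncomputable def rogersL₀ (t : ℝ) : ℝ := Li2 t + 1 / 2 * log t * log (1 - t)

noncomputable def rogersLDeriv (t : ℝ) : ℝ := -(1 / 2) * (log (1 - t) / t + log t / (1 - t))

lemma rogersL_of_lt_one {t : ℝ} (h : t < 1) : rogersL t = rogersL₀ t := if_pos h

lemma rogersL_of_one_le {t : ℝ} (h : 1 ≤ t) : rogersL t = π ^ 2 / 3 - rogersL₀ t⁻¹ := by
  rw [rogersL, if_neg h.not_gt, rogersL₀, one_div]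

lemma rogersL₀_one : rogersL₀ 1 = π ^ 2 / 6 := by simp [rogersL₀, Li2_one]

lemma rogersL_one : rogersL 1 = π ^ 2 / 6 := by
  rw [rogersL_of_one_le le_rfl, inv_one, rogersL₀_one]
  ring

lemma rogersL_of_le_one {t : ℝ} (h : t ≤ 1) : rogersL t = rogersL₀ t := by
  rcases h.lt_or_eq with h | rfl
  · exact rogersL_of_lt_one h
  · rw [rogersL_one, rogersL₀_one]

lemma hasDerivAt_rogersL₀ {t : ℝ} (h : |t| < 1) (h0 : t ≠ 0) :
    HasDerivAt rogersL₀ (rogersLDeriv t) t := by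
  have h1 : 1 - t ≠ 0 := sub_ne_zero.mpr (abs_lt.mp h).2.ne'
  have hlog : HasDerivAt (fun s => log (1 - s)) ((1 - t)⁻¹ * -1) t :=
    (hasDerivAt_log h1).comp t ((hasDerivAt_id t).const_sub 1)
  refine ((hasDerivAt_Li2 h h0).add
    (((hasDerivAt_log h0).const_mul (1 / 2)).mul hlog)).congr_deriv ?_
  rw [rogersLDeriv]
  field_simp
  ring

lemma rogersLDeriv_inv {t : ℝ} (h0 : t ≠ 0) (h1 : t ≠ 1) :
    rogersLDeriv t⁻¹ * (t ^ 2)⁻¹ = rogersLDeriv t := by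
  have h1' : t - 1 ≠ 0 := sub_ne_zero.mpr h1
  have hinv : 1 - t⁻¹ = (t - 1) / t := by field_simp
  have hlog : log (1 - t⁻¹) = log (1 - t) - log t := by
    rw [hinv, log_div h1' h0, ← log_neg_eq_log (t - 1), neg_sub]
  rw [rogersLDeriv, rogersLDeriv, hlog, log_inv, hinv]
  field_simp
  ring

lemma hasDerivAt_rogersL {t : ℝ} (h0 : 0 < t) (h1 : t ≠ 1) :
    HasDerivAt rogersL (rogersLDeriv t) t := by
  rcases h1.lt_or_gt with hlt | hgt
  · have : rogersL =ᶠ[𝓝 t] rogersL₀ :=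
      (eventually_lt_nhds hlt).mono fun s hs => rogersL_of_lt_one hs
    exact (hasDerivAt_rogersL₀ (abs_lt.mpr ⟨by linarith, hlt⟩) h0.ne').congr_of_eventuallyEq this
  · have : rogersL =ᶠ[𝓝 t] fun s => π ^ 2 / 3 - rogersL₀ s⁻¹ :=
      (eventually_gt_nhds hgt).mono fun s hs => rogersL_of_one_le hs.le
    have hinv : |t⁻¹| < 1 := by
      rw [abs_inv, abs_of_pos h0]
      exact inv_lt_one_of_one_lt₀ hgt
    refine HasDerivAt.congr_of_eventuallyEq ?_ this
    refine (((hasDerivAt_rogersL₀ hinv (inv_ne_zero h0.ne')).comp t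
      (hasDerivAt_inv h0.ne')).const_sub (π ^ 2 / 3)).congr_deriv ?_
    rw [← rogersLDeriv_inv h0.ne' h1]
    ring

lemma continuousWithinAt_rogersL₀_one : ContinuousWithinAt rogersL₀ (Iic 1) 1 := by
  have hLi2 : ContinuousWithinAt Li2 (Iic 1) 1 :=
    (continuousOn_Li2 1 ⟨by norm_num, le_rfl⟩).mono_of_mem_nhdsWithin
      (Icc_mem_nhdsLE (by norm_num))
  have hlog : ContinuousAt (fun t => 1 / 2 * log t * log (1 - t)) 1 := by
    simpa [ContinuousAt, mul_assoc] using tendsto_log_mul_log_one_sub.const_mul (1 / 2 : ℝ)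
  exact hLi2.add hlog.continuousWithinAt

lemma continuousAt_rogersL_one : ContinuousAt rogersL 1 := by
  have hle : ContinuousWithinAt rogersL (Iic 1) 1 :=
    continuousWithinAt_rogersL₀_one.congr (fun _ ht => rogersL_of_le_one ht)
      (rogersL_of_le_one le_rfl)
  have hinv : ContinuousWithinAt (fun t : ℝ => rogersL₀ t⁻¹) (Ici 1) 1 :=
    continuousWithinAt_rogersL₀_one.comp_of_eq (continuousAt_inv₀ one_ne_zero).continuousWithinAt
      (fun _ ht => mem_Iic.mpr (inv_le_one_of_one_le₀ ht)) inv_one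
  have hge : ContinuousWithinAt rogersL (Ici 1) 1 :=
    (continuousWithinAt_const.sub hinv).congr (fun _ ht => rogersL_of_one_le ht)
      (rogersL_of_one_le le_rfl)
  rw [← continuousWithinAt_univ, ← Iic_union_Ici]
  exact hle.union hge

lemma continuousAt_rogersL {t : ℝ} (h : 0 < t) : ContinuousAt rogersL t := by
  rcases eq_or_ne t 1 with rfl | h1
  exacts [continuousAt_rogersL_one, (hasDerivAt_rogersL h h1).continuousAt]

noncomputable def rogersFiveTerm (x t : ℝ) : ℝ :=
  rogersL x - rogersL t + rogersL (t / x) - rogersL ((t - 1) / (x - 1))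
    + rogersL ((1 - 1 / t) / (1 - 1 / x))

lemma rogersFiveTerm_self {x : ℝ} (hx0 : x ≠ 0) (hx1 : x ≠ 1) :
    rogersFiveTerm x x = π ^ 2 / 6 := by
  have hx1' : 1 - 1 / x ≠ 0 := by
    rw [Ne, sub_eq_zero, eq_comm, one_div, inv_eq_one]
    exact hx1
  simp only [rogersFiveTerm, div_self hx0, div_self (sub_ne_zero.mpr hx1), div_self hx1',
    rogersL_one]
  ring

lemma rogersLDeriv_fiveTerm {x t : ℝ} (hx0 : x ≠ 0) (hx1 : x ≠ 1) (ht0 : t ≠ 0) (ht1 : t ≠ 1)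
    (htx : t ≠ x) :
    rogersLDeriv t = rogersLDeriv (t / x) / x - rogersLDeriv ((t - 1) / (x - 1)) / (x - 1)
      + rogersLDeriv ((1 - 1 / t) / (1 - 1 / x)) / t ^ 2 / (1 - 1 / x) := by
  have hx1' : x - 1 ≠ 0 := sub_ne_zero.mpr hx1
  have ht1' : t - 1 ≠ 0 := sub_ne_zero.mpr ht1
  have hxt : x - t ≠ 0 := sub_ne_zero.mpr htx.symm
  have e1 : 1 - t / x = (x - t) / x := by field_simp
  have e2 : 1 - (t - 1) / (x - 1) = (x - t) / (x - 1) := by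
    field_simp
    ring
  have e3 : (1 - 1 / t) / (1 - 1 / x) = x * (t - 1) / (t * (x - 1)) := by field_simp
  have e4 : 1 - x * (t - 1) / (t * (x - 1)) = (x - t) / (t * (x - 1)) := by
    field_simp
    ring
  have e5 : 1 - 1 / x = (x - 1) / x := by field_simp
  -- `log (-a) = log a`, so the signs of `t - 1`, `x - 1`, `x - t` never matter
  have hneg : ∀ a : ℝ, log (a - 1) = log (1 - a) := fun a => by rw [← log_neg_eq_log, neg_sub]
  have l1 : log (t / x) = log t - log x := log_div ht0 hx0
  have l2 : log ((x - t) / x) = log (x - t) - log x := log_div hxt hx0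
  have l3 : log ((t - 1) / (x - 1)) = log (1 - t) - log (1 - x) := by
    rw [log_div ht1' hx1', hneg, hneg]
  have l4 : log ((x - t) / (x - 1)) = log (x - t) - log (1 - x) := by
    rw [log_div hxt hx1', hneg]
  have l5 : log (x * (t - 1) / (t * (x - 1))) = log x + log (1 - t) - (log t + log (1 - x)) := by
    rw [log_div (mul_ne_zero hx0 ht1') (mul_ne_zero ht0 hx1'), log_mul hx0 ht1',
      log_mul ht0 hx1', hneg, hneg]
  have l6 : log ((x - t) / (t * (x - 1))) = log (x - t) - (log t + log (1 - x)) := by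
    rw [log_div hxt (mul_ne_zero ht0 hx1'), log_mul ht0 hx1', hneg]
  rw [e3]
  simp only [rogersLDeriv]
  rw [e1, e2, e4, e5, l1, l2, l3, l4, l5, l6]
  field_simp
  ring

lemma one_sub_one_div_div_one_sub_one_div_pos {x t : ℝ} (hx : 0 < x) (ht : 0 < t)
    (hside : 0 < (t - 1) / (x - 1)) : 0 < (1 - 1 / t) / (1 - 1 / x) := by
  rw [one_sub_div ht.ne', one_sub_div hx.ne']
  rcases div_pos_iff.mp hside with ⟨ht1, hx1⟩ | ⟨ht1, hx1⟩
  · exact div_pos (div_pos ht1 ht) (div_pos hx1 hx)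
  · exact div_pos_of_neg_of_neg (div_neg_of_neg_of_pos ht1 ht) (div_neg_of_neg_of_pos hx1 hx)

lemma continuousAt_rogersFiveTerm {x t : ℝ} (hx : 0 < x) (ht : 0 < t)
    (hside : 0 < (t - 1) / (x - 1)) : ContinuousAt (rogersFiveTerm x) t := by
  have h3 : ContinuousAt (fun s => rogersL (s / x)) t :=
    (continuousAt_rogersL (div_pos ht hx)).comp (f := fun s => s / x) (by fun_prop)
  have h4 : ContinuousAt (fun s => rogersL ((s - 1) / (x - 1))) t :=
    (continuousAt_rogersL hside).comp (f := fun s => (s - 1) / (x - 1)) (by fun_prop)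
  have h5 : ContinuousAt (fun s => rogersL ((1 - 1 / s) / (1 - 1 / x))) t :=
    (continuousAt_rogersL (one_sub_one_div_div_one_sub_one_div_pos hx ht hside)).comp
      (f := fun s => (1 - 1 / s) / (1 - 1 / x)) (by fun_prop (disch := exact ht.ne'))
  exact (((continuousAt_const.sub (continuousAt_rogersL ht)).add h3).sub h4).add h5

lemma hasDerivAt_rogersFiveTerm {x t : ℝ} (hx : 0 < x) (ht : 0 < t)
    (hside : 0 < (t - 1) / (x - 1)) (htx : t ≠ x) : HasDerivAt (rogersFiveTerm x) 0 t := by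
  have hx1 : x ≠ 1 := by
    rintro rfl
    simp at hside
  have ht1 : t ≠ 1 := by
    rintro rfl
    simp at hside
  have hne : 1 - 1 / t ≠ 1 - 1 / x := by
    rw [Ne, sub_right_inj, one_div, one_div, inv_inj]
    exact htx
  have h3 := (hasDerivAt_rogersL (div_pos ht hx) (div_ne_one_of_ne htx)).comp t
    ((hasDerivAt_id' t).div_const x)
  have h4 := (hasDerivAt_rogersL hside (div_ne_one_of_ne (sub_left_injective.ne htx))).comp t
    (((hasDerivAt_id' t).sub_const 1).div_const (x - 1))
  have h5 := (hasDerivAt_rogersL (one_sub_one_div_div_one_sub_one_div_pos hx ht hside)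
    (div_ne_one_of_ne hne)).comp t
    (((hasDerivAt_const t 1).sub ((hasDerivAt_const t 1).div (hasDerivAt_id' t) ht.ne')).div_const
      (1 - 1 / x))
  refine ((((hasDerivAt_const t (rogersL x)).sub (hasDerivAt_rogersL ht ht1)).add h3).sub
    h4).add h5 |>.congr_deriv ?_
  linear_combination -rogersLDeriv_fiveTerm hx.ne' hx1 ht.ne' ht1 htx

theorem rogersL_five_term_general (x y : ℝ) (hx : 0 < x) (hy : 0 < y)
    (h4 : 0 < (y - 1) / (x - 1)) :
    ∃ k : ℤ, rogersL x - rogersL y + rogersL (y / x) - rogersL ((y - 1) / (x - 1))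
      + rogersL ((1 - 1 / y) / (1 - 1 / x)) = k * (Real.pi ^ 2 / 6) := by
  have hx1 : x ≠ 1 := by
    rintro rfl
    simp at h4
  have hpos : ∀ t ∈ uIcc x y, 0 < t := fun t ht => ordConnected_Ioi.uIcc_subset hx hy ht
  have hconst : rogersFiveTerm x x = rogersFiveTerm x y :=
    eq_of_continuousOn_uIcc_of_hasDerivAt_zero
      (fun t ht => (continuousAt_rogersFiveTerm hx (hpos t ht)
        (div_sub_one_pos_of_mem_uIcc h4 ht)).continuousWithinAt)
      fun t ht => hasDerivAt_rogersFiveTerm hx (hpos t (uIoo_subset_uIcc_self ht))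
        (div_sub_one_pos_of_mem_uIcc h4 (uIoo_subset_uIcc_self ht))
        fun htx => left_notMem_uIoo (htx ▸ ht)
  refine ⟨1, ?_⟩
  rw [Int.cast_one, one_mul, ← rogersFiveTerm_self hx.ne' hx1, hconst, rogersFiveTerm]

theorem rogersL_five_term (x y : ℝ) (hx : 0 < x) (hx1 : x ≠ 1) (hy : 0 < y) (hy1 : y ≠ 1)
    (hxy : x ≠ y)
    (h3 : 0 < y / x) (h3' : y / x ≠ 1)
    (h4 : 0 < (y - 1) / (x - 1)) (h4' : (y - 1) / (x - 1) ≠ 1)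
    (h5 : 0 < (1 - 1 / y) / (1 - 1 / x)) (h5' : (1 - 1 / y) / (1 - 1 / x) ≠ 1) :
    ∃ k : ℤ, rogersL x - rogersL y + rogersL (y / x) - rogersL ((y - 1) / (x - 1))
      + rogersL ((1 - 1 / y) / (1 - 1 / x)) = k * (Real.pi ^ 2 / 6) :=
  rogersL_five_term_general x y hx hy h4
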